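/- Following the dynamic oracle produces the optimal tree: if c is a valid configuration and c = c_0 ⊢_{τ_1} c_1 ⊢_{τ_2} ⋯ ⊢_{τ_m} c_m is any sequence of transitions with τ_k ∈ dyna(c_{k−1}) for every k and with c_m final, then the bracket set of c_m equals t*(c). -/

import Mathlib

/-!
Formalization of the span-based Structure/Label transition parsing system of
Cross & Huang (2016), "Span-Based Constituency Parsing with a Structure-Label
System and Provably Optimal Dynamic Oracles".

A configuration is `(z, σ, t)` where `z` is the step number, `σ` the stack of
span boundaries and `t` the set of brackets built so far.  A bracket is a
triple `(X, i, j)` with `X` a nonterminal label and `i < j ≤ n` a span.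
-/

namespace SpanParser

structure Config (N : Type*) where
  z : ℕ
  σ : List ℕ
  t : Finset (N × ℕ × ℕ)

variable {N : Type*}

/-- The span of a bracket. -/
def span (b : N × ℕ × ℕ) : ℕ × ℕ := b.2

/-- Top (rightmost) boundary of the stack. -/
def topJ (σ : List ℕ) : ℕ := σ.getLastD 0

/-- Second-to-top boundary of the stack. -/
def topI (σ : List ℕ) : ℕ := σ.dropLast.getLastD 0

/-- Parser actions: shift, combine, label-`X`, and nolabel. -/
inductive Action (N : Type*) where
  | sh : Action N
  | comb : Action N
  | label : N → Action N
  | nolabel : Action N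

variable [DecidableEq N]

/-- Applicability of an action at a configuration (for sentence length `n`). -/
def App (n : ℕ) (c : Config N) : Action N → Prop
  | .sh      => Even c.z ∧ c.σ ≠ [] ∧ topJ c.σ < n
  | .comb    => Even c.z ∧ 3 ≤ c.σ.length
  | .label _ => Odd c.z ∧ 2 ≤ c.σ.length
  | .nolabel => Odd c.z ∧ 2 ≤ c.σ.length ∧ c.z < 4 * n - 1

/-- The result `τ(c)` of applying action `τ` to configuration `c`. -/
def doAct (c : Config N) : Action N → Config N
  | .sh      => ⟨c.z + 1, c.σ ++ [topJ c.σ + 1], c.t⟩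
  | .comb    => ⟨c.z + 1, c.σ.dropLast.dropLast ++ [topJ c.σ], c.t⟩
  | .label X => ⟨c.z + 1, c.σ, insert (X, topI c.σ, topJ c.σ) c.t⟩
  | .nolabel => ⟨c.z + 1, c.σ, c.t⟩

/-- The initial configuration `(0, [0], ∅)`. -/
def initial (N : Type*) : Config N := ⟨0, [0], ∅⟩

/-- One transition step `c ⊢ c'`. -/
def Step (n : ℕ) (c c' : Config N) : Prop := ∃ a, App n c a ∧ c' = doAct c a

/-- `⊢*`: reflexive-transitive closure of the transition relation. -/
def Reaches (n : ℕ) : Config N → Config N → Prop := Relation.ReflTransGen (Step n)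

/-- A configuration is valid if it is reachable from the initial configuration. -/
def Valid (n : ℕ) (c : Config N) : Prop := Reaches n (initial N) c

/-- A final configuration: `σ = [0, n]` and `z = 4n - 2`. -/
def Final (n : ℕ) (c : Config N) : Prop := c.σ = [0, n] ∧ c.z = 4 * n - 2

/-- `D(c)`: the set of trees of final configurations reachable from `c`. -/
def Dset (n : ℕ) (c : Config N) : Set (Finset (N × ℕ × ℕ)) :=
  {t' | ∃ c', Reaches n c c' ∧ Final n c' ∧ c'.t = t'}

/-- `(i,j) ⪯ (p,q)`: span `(i,j)` is encompassed by `(p,q)`, i.e. `p ≤ i < j ≤ q`. -/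
def Enc (s₁ s₂ : ℕ × ℕ) : Prop := s₂.1 ≤ s₁.1 ∧ s₁.1 < s₁.2 ∧ s₁.2 ≤ s₂.2

/-- `(i,j) ≺ (p,q)`: strict encompassment. -/
def SEnc (s₁ s₂ : ℕ × ℕ) : Prop := Enc s₁ s₂ ∧ s₁ ≠ s₂

/-- `tG` is a gold tree for sentence length `n`: valid spans, pairwise-distinct
spans, pairwise non-crossing spans, and exactly one bracket with span `(0, n)`
(uniqueness follows from distinctness of spans). -/
structure IsGold (n : ℕ) (tG : Finset (N × ℕ × ℕ)) : Prop where
  validSpans : ∀ b ∈ tG, (span b).1 < (span b).2 ∧ (span b).2 ≤ n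
  distinctSpans : ∀ b₁ ∈ tG, ∀ b₂ ∈ tG, span b₁ = span b₂ → b₁ = b₂
  noncrossing : ∀ b₁ ∈ tG, ∀ b₂ ∈ tG,
    Enc (span b₁) (span b₂) ∨ Enc (span b₂) (span b₁) ∨
    (span b₁).2 ≤ (span b₂).1 ∨ (span b₂).2 ≤ (span b₁).1
  root : ∃ X, (X, 0, n) ∈ tG

open Classical in
/-- `left(c)`: gold brackets (strictly, at even steps) encompassing the top
span whose left boundary occurs on the stack. -/
noncomputable def leftSet (tG : Finset (N × ℕ × ℕ)) (c : Config N) :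
    Finset (N × ℕ × ℕ) :=
  tG.filter fun b =>
    (if Even c.z then SEnc (topI c.σ, topJ c.σ) (span b)
     else Enc (topI c.σ, topJ c.σ) (span b)) ∧ (span b).1 ∈ c.σ

open Classical in
/-- `right(c)`: gold brackets entirely on the queue. -/
noncomputable def rightSet (tG : Finset (N × ℕ × ℕ)) (c : Config N) :
    Finset (N × ℕ × ℕ) :=
  tG.filter fun b => topJ c.σ ≤ (span b).1

open Classical in
/-- `reach(c)`: the reachable gold brackets (all of `t_G` at the initial
configuration, whose stack has fewer than two boundaries). -/
noncomputable def reach (tG : Finset (N × ℕ × ℕ)) (c : Config N) :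
    Finset (N × ℕ × ℕ) :=
  if c.σ.length < 2 then tG else leftSet tG c ∪ rightSet tG c

/-- The optimal tree `t*(c) = t ∪ reach(c)`. -/
noncomputable def tstar (tG : Finset (N × ℕ × ℕ)) (c : Config N) :
    Finset (N × ℕ × ℕ) :=
  c.t ∪ reach tG c

/-- `b = next(c)`: the `≺`-minimal element of `left(c)`. -/
def IsNext (tG : Finset (N × ℕ × ℕ)) (c : Config N) (b : N × ℕ × ℕ) : Prop :=
  b ∈ leftSet tG c ∧ ∀ b' ∈ leftSet tG c, Enc (span b) (span b')

/-- The dynamic-oracle policy `dyna(c)` as a predicate on actions. -/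
def Dyna (tG : Finset (N × ℕ × ℕ)) (c : Config N) (a : Action N) : Prop :=
  if c.σ.length < 2 then a = Action.sh
  else if Even c.z then
    ∃ b, IsNext tG c b ∧
      (((span b).1 = topI c.σ ∧ topJ c.σ < (span b).2 ∧ a = Action.sh) ∨
       ((span b).1 < topI c.σ ∧ (span b).2 = topJ c.σ ∧ a = Action.comb) ∨
       ((span b).1 < topI c.σ ∧ topJ c.σ < (span b).2 ∧
          (a = Action.sh ∨ a = Action.comb)))
  else
    (∃ X, (X, topI c.σ, topJ c.σ) ∈ tG ∧ a = Action.label X) ∨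
    ((∀ X, (X, topI c.σ, topJ c.σ) ∉ tG) ∧ a = Action.nolabel)

/-- `F1` of a predicted bracket set `t'` against the gold tree `tG`
(`0` when `t' ∩ tG = ∅`). -/
noncomputable def f1 (tG t' : Finset (N × ℕ × ℕ)) : ℝ :=
  if t' ∩ tG = ∅ then 0
  else
    (2 * (((t' ∩ tG).card : ℝ) / (tG.card : ℝ)) * (((t' ∩ tG).card : ℝ) / (t'.card : ℝ))) /
      ((((t' ∩ tG).card : ℝ) / (tG.card : ℝ)) + (((t' ∩ tG).card : ℝ) / (t'.card : ℝ)))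

/-- `F1(c)`: the best `F1` among trees reachable from `c`. -/
noncomputable def configF1 (n : ℕ) (tG : Finset (N × ℕ × ℕ)) (c : Config N) : ℝ :=
  sSup (f1 tG '' Dset n c)

/-- A run of (applicable) actions from one configuration to another. -/
inductive Run (n : ℕ) : Config N → List (Action N) → Config N → Prop
  | refl (c : Config N) : Run n c [] c
  | step {c c' : Config N} {as : List (Action N)} (a : Action N)
      (happ : App n c a) (h : Run n (doAct c a) as c') : Run n c (a :: as) c'

/-- A run all of whose actions follow the dynamic oracle. -/
inductive DynaRun (n : ℕ) (tG : Finset (N × ℕ × ℕ)) : Config N → Config N → Prop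
  | refl (c : Config N) : DynaRun n tG c c
  | step {c c' : Config N} (a : Action N) (happ : App n c a) (hdyna : Dyna tG c a)
      (h : DynaRun n tG (doAct c a) c') : DynaRun n tG c c'

def isSh : Action N → Bool
  | .sh => true
  | _ => false

def isComb : Action N → Bool
  | .comb => true
  | _ => false

/-- Label-step actions: `label-X` or `nolabel`. -/
def isLabelStep : Action N → Bool
  | .label _ => true
  | .nolabel => true
  | _ => false

end SpanParser

/-!
The optimal tree is an invariant of the oracle: every action in `dyna(c)` keeps `t ∪ reach(c)`
unchanged, and at a final configuration `reach` is empty. For `label-X` the gold bracket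
`(X, i, j)` just moves from `reach` into `t`. For `sh` and `comb` the choice is dictated by
`next(c)`: every other bracket of `left(c)` encloses `next(c)`, so when `next(c)` ends after `j`
all of them survive a shift (and the gold brackets starting at `j` pass from `right` to `left`),
and when `next(c)` starts before `i` all of them start at a boundary that survives a combine.
-/

namespace SpanParser

variable {N : Type*}

@[simp] lemma topJ_append_pair (l : List ℕ) (i j : ℕ) : topJ (l ++ [i, j]) = j := by
  simp [topJ]

@[simp] lemma topI_append_pair (l : List ℕ) (i j : ℕ) : topI (l ++ [i, j]) = i := by
  simp [topI]

lemma exists_eq_append_pair {σ : List ℕ} (h : 2 ≤ σ.length) : ∃ l i j, σ = l ++ [i, j] := by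
  obtain ⟨l, j, rfl⟩ := (List.eq_nil_or_concat σ).resolve_left (by rintro rfl; simp at h)
  obtain ⟨l, i, rfl⟩ := (List.eq_nil_or_concat l).resolve_left (by rintro rfl; simp at h)
  exact ⟨l, i, j, by simp⟩

lemma exists_eq_append_triple {σ l : List ℕ} {i j : ℕ} (hσ : σ = l ++ [i, j])
    (h : 3 ≤ σ.length) : ∃ l' i', σ = l' ++ [i', i, j] := by
  obtain ⟨l', i', rfl⟩ := (List.eq_nil_or_concat l).resolve_left (by rintro rfl; simp [hσ] at h)
  exact ⟨l', i', by simp [hσ]⟩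

lemma lt_of_pairwise_append_pair {l : List ℕ} {i j : ℕ} (h : (l ++ [i, j]).Pairwise (· < ·)) :
    (∀ x ∈ l, x < i) ∧ i < j := by
  simp only [List.pairwise_append, List.pairwise_pair, List.mem_cons] at h
  exact ⟨fun x hx => h.2.2 x hx i (by simp), h.2.1⟩

lemma lt_of_pairwise_append_triple {l : List ℕ} {i' i j : ℕ}
    (h : (l ++ [i', i, j]).Pairwise (· < ·)) : (∀ x ∈ l, x < i') ∧ i' < i ∧ i < j := by
  obtain ⟨hl, hi'i⟩ := lt_of_pairwise_append_pair (l := l) (i := i') (j := i) (h.sublist (by simp))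
  exact ⟨hl, hi'i, (lt_of_pairwise_append_pair (l := l ++ [i']) (by simpa using h)).2⟩

def WellFormed (c : Config N) : Prop :=
  c.σ.Pairwise (· < ·) ∧ (2 ≤ c.σ.length ∨ c = initial N)

section

variable {n : ℕ} {tG : Finset (N × ℕ × ℕ)} {c c' : Config N} {a : Action N} {b : N × ℕ × ℕ}
  {l : List ℕ} {i' i j : ℕ}

lemma IsGold.pos (hG : IsGold n tG) : 0 < n :=
  let ⟨_, hX⟩ := hG.root
  (hG.validSpans _ hX).1

lemma IsNext.span_enc (hb : IsNext tG c b) (hσ : c.σ = l ++ [i, j]) (hij : i < j)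
    (hz : Even c.z) {Y : N} {p q : ℕ} (hY : (Y, p, q) ∈ tG) (hpi : p ≤ i) (hjq : j ≤ q)
    (hne : (p, q) ≠ (i, j)) (hp : p ∈ c.σ) : p ≤ (span b).1 ∧ (span b).2 ≤ q := by
  have hmem : (Y, p, q) ∈ leftSet tG c := by
    simp only [leftSet, Finset.mem_filter, if_pos hz, SEnc, Enc, span, hσ, topI_append_pair,
      topJ_append_pair]
    exact ⟨hY, ⟨⟨hpi, hij, hjq⟩, fun h => hne h.symm⟩, hσ ▸ hp⟩
  obtain ⟨hp', -, hq'⟩ := hb.2 _ hmem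
  exact ⟨hp', hq'⟩

variable [DecidableEq N]

@[simp] lemma z_doAct : (doAct c a).z = c.z + 1 := by
  cases a <;> rfl

lemma σ_doAct_sh (hσ : c.σ = l ++ [i, j]) : (doAct c .sh).σ = (l ++ [i]) ++ [j, j + 1] := by
  simp [doAct, hσ]

lemma σ_doAct_comb (hσ : c.σ = l ++ [i', i, j]) : (doAct c .comb).σ = l ++ [i', j] := by
  have hσ₂ : c.σ = (l ++ [i']) ++ [i, j] := by simp [hσ]
  simp only [doAct, hσ₂, topJ_append_pair]
  simp

lemma mem_reach (hσ : c.σ = l ++ [i, j]) (hij : i < j) {Y : N} {p q : ℕ} :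
    (Y, p, q) ∈ reach tG c ↔ (Y, p, q) ∈ tG ∧
      ((p ≤ i ∧ j ≤ q ∧ (Even c.z → (p, q) ≠ (i, j)) ∧ p ∈ c.σ) ∨ j ≤ p) := by
  have hlen : ¬ c.σ.length < 2 := by simp [hσ]
  have hI : topI c.σ = i := by simp [hσ]
  have hJ : topJ c.σ = j := by simp [hσ]
  simp only [reach, hlen, if_false, Finset.mem_union, leftSet, rightSet, Finset.mem_filter, hI, hJ,
    SEnc, Enc, span]
  split_ifs <;> grind

lemma reach_doAct_sh (hG : IsGold n tG) (hσ : c.σ = l ++ [i, j])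
    (hsorted : c.σ.Pairwise (· < ·)) (hz : Even c.z) (hb : IsNext tG c b)
    (hbj : j < (span b).2) : reach tG (doAct c .sh) = reach tG c := by
  obtain ⟨hl, hij⟩ := lt_of_pairwise_append_pair (hσ ▸ hsorted)
  ext ⟨Y, p, q⟩
  rw [mem_reach (σ_doAct_sh hσ) (Nat.lt_succ_self j), mem_reach hσ hij, σ_doAct_sh hσ, hσ, z_doAct]
  refine and_congr_right fun hY => ?_
  have henc := hb.span_enc hσ hij hz hY
  have hpq := hG.validSpans _ hY
  simp only [span, hσ, hz, Nat.even_add_one, List.mem_append, List.mem_cons, List.not_mem_nil,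
    or_false] at henc hpq hbj ⊢
  grind

lemma reach_doAct_comb (hσ : c.σ = l ++ [i', i, j]) (hsorted : c.σ.Pairwise (· < ·))
    (hz : Even c.z) (hb : IsNext tG c b) (hbi : (span b).1 < i) :
    reach tG (doAct c .comb) = reach tG c := by
  have hσ₂ : c.σ = (l ++ [i']) ++ [i, j] := by simp [hσ]
  obtain ⟨hl, hi'i, hij⟩ := lt_of_pairwise_append_triple (hσ ▸ hsorted)
  ext ⟨Y, p, q⟩
  rw [mem_reach (σ_doAct_comb hσ) (hi'i.trans hij), mem_reach hσ₂ hij, σ_doAct_comb hσ, hσ,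
    z_doAct]
  refine and_congr_right fun hY => ?_
  have henc := hb.span_enc hσ₂ hij hz hY
  simp only [span, hσ, hz, Nat.even_add_one, List.mem_append, List.mem_cons, List.not_mem_nil,
    or_false] at henc hbi ⊢
  grind

lemma reach_eq_union_filter_span (hσ : c.σ = l ++ [i, j]) (hij : i < j) (hz : ¬ Even c.z)
    (hσ' : c'.σ = c.σ) (hz' : c'.z = c.z + 1) :
    reach tG c = reach tG c' ∪ tG.filter (span · = (i, j)) := by
  ext ⟨Y, p, q⟩
  rw [Finset.mem_union, Finset.mem_filter, mem_reach hσ hij, mem_reach (hσ' ▸ hσ) hij, hσ', hz']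
  simp only [span, Nat.even_add_one, hz]
  grind

lemma tstar_doAct_label (hG : IsGold n tG) (hσ : c.σ = l ++ [i, j]) (hij : i < j)
    (hz : ¬ Even c.z) {X : N} (hX : (X, i, j) ∈ tG) :
    tstar tG (doAct c (.label X)) = tstar tG c := by
  have hgold : tG.filter (span · = (i, j)) = {(X, i, j)} := by
    ext b
    simp only [Finset.mem_filter, Finset.mem_singleton]
    exact ⟨fun ⟨hb, hbs⟩ => hG.distinctSpans b hb _ hX hbs, fun h => h ▸ ⟨hX, rfl⟩⟩
  rw [tstar, tstar, reach_eq_union_filter_span (c' := doAct c (.label X)) hσ hij hz rfl rfl, hgold]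
  simp [doAct, hσ, Finset.union_comm]

lemma tstar_doAct_nolabel (hσ : c.σ = l ++ [i, j]) (hij : i < j) (hz : ¬ Even c.z)
    (hX : ∀ X, (X, i, j) ∉ tG) : tstar tG (doAct c .nolabel) = tstar tG c := by
  have hgold : tG.filter (span · = (i, j)) = ∅ :=
    Finset.filter_eq_empty_iff.2 fun ⟨X, p, q⟩ hb hbs => hX X (by simp_all [span])
  rw [tstar, tstar, reach_eq_union_filter_span (c' := doAct c .nolabel) hσ hij hz rfl rfl, hgold,
    Finset.union_empty]
  rfl

lemma tstar_doAct_sh_initial (hG : IsGold n tG) :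
    tstar tG (doAct (initial N) .sh) = tstar tG (initial N) := by
  have hσ : (doAct (initial N) .sh).σ = [] ++ [0, 1] := by simp [doAct, initial, topJ]
  have hreach : reach tG (doAct (initial N) .sh) = tG := by
    ext ⟨Y, p, q⟩
    rw [mem_reach hσ zero_lt_one, hσ, and_iff_left_iff_imp]
    intro hY
    have hpq := (hG.validSpans _ hY).1
    simp only [span] at hpq
    rcases Nat.eq_zero_or_pos p with rfl | hp
    · exact .inl ⟨le_rfl, hpq, by simp [initial, doAct], by simp⟩
    · exact .inr hp
  rw [tstar, hreach, tstar]
  simp [reach, initial, doAct]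

lemma reach_eq_empty_of_final (hG : IsGold n tG) (hf : Final n c) : reach tG c = ∅ := by
  obtain ⟨hσ, hz⟩ := hf
  have hz : Even c.z := by rw [hz]; exact ⟨2 * n - 1, by omega⟩
  ext ⟨Y, p, q⟩
  rw [mem_reach (l := []) hσ hG.pos]
  have := hG.validSpans (Y, p, q)
  simp only [span] at this
  simp only [hz, hσ, Finset.notMem_empty, iff_false]
  grind

lemma WellFormed.doAct (hc : WellFormed c) (happ : App n c a) : WellFormed (doAct c a) := by
  obtain ⟨hsorted, hlen | rfl⟩ := hc
  swap
  · cases a <;> simp_all [App, SpanParser.doAct, WellFormed, initial, topJ]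
  obtain ⟨l, i, j, hσ⟩ := exists_eq_append_pair hlen
  refine ⟨?_, .inl ?_⟩
  · cases a with
    | sh =>
      obtain ⟨hl, hij⟩ := lt_of_pairwise_append_pair (hσ ▸ hsorted)
      refine List.pairwise_append.2 ⟨hsorted, List.pairwise_singleton _ _, fun x hx y hy => ?_⟩
      simp only [hσ, topJ_append_pair, List.mem_append, List.mem_cons,
        List.not_mem_nil, or_false] at hx hy
      grind
    | comb =>
      obtain ⟨l', i', hσ₃⟩ := exists_eq_append_triple hσ happ.2
      rw [σ_doAct_comb hσ₃]
      exact hsorted.sublist (by simp [hσ₃])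
    | label X => exact hsorted
    | nolabel => exact hsorted
  · cases a <;> simp [SpanParser.doAct, App] at happ ⊢ <;> omega

lemma Valid.wellFormed (hc : Valid n c) : WellFormed c := by
  induction hc with
  | refl => exact ⟨by simp [initial], Or.inr rfl⟩
  | tail _ hstep ih =>
    obtain ⟨a, happ, rfl⟩ := hstep
    exact ih.doAct happ

lemma tstar_doAct_of_dyna (hG : IsGold n tG) (hc : WellFormed c) (happ : App n c a)
    (hdyna : Dyna tG c a) : tstar tG (doAct c a) = tstar tG c := by
  obtain ⟨hsorted, hlen | rfl⟩ := hc
  swap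
  · obtain rfl : a = .sh := by simpa [Dyna, initial] using hdyna
    exact tstar_doAct_sh_initial hG
  obtain ⟨l, i, j, hσ⟩ := exists_eq_append_pair hlen
  have hij := (lt_of_pairwise_append_pair (hσ ▸ hsorted)).2
  rw [Dyna, if_neg (by omega)] at hdyna
  by_cases hz : Even c.z
  · rw [if_pos hz, hσ, topI_append_pair, topJ_append_pair] at hdyna
    obtain ⟨b, hb, hcase⟩ := hdyna
    have hsh (hbj : j < (span b).2) : tstar tG (doAct c .sh) = tstar tG c :=
      congrArg (c.t ∪ ·) (reach_doAct_sh hG hσ hsorted hz hb hbj)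
    have hcomb (hbi : (span b).1 < i) (happ : App n c .comb) :
        tstar tG (doAct c .comb) = tstar tG c := by
      obtain ⟨l', i', hσ₃⟩ := exists_eq_append_triple hσ happ.2
      exact congrArg (c.t ∪ ·) (reach_doAct_comb hσ₃ hsorted hz hb hbi)
    rcases hcase with ⟨-, hbj, rfl⟩ | ⟨hbi, -, rfl⟩ | ⟨hbi, hbj, rfl | rfl⟩
    · exact hsh hbj
    · exact hcomb hbi happ
    · exact hsh hbj
    · exact hcomb hbi happ
  · rw [if_neg hz, hσ, topI_append_pair, topJ_append_pair] at hdyna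
    rcases hdyna with ⟨X, hX, rfl⟩ | ⟨hX, rfl⟩
    · exact tstar_doAct_label hG hσ hij hz hX
    · exact tstar_doAct_nolabel hσ hij hz hX

lemma DynaRun.t_eq_tstar (hG : IsGold n tG) (hrun : DynaRun n tG c c') (hc : WellFormed c)
    (hf : Final n c') : c'.t = tstar tG c := by
  induction hrun with
  | refl c => simp [tstar, reach_eq_empty_of_final hG hf]
  | step a happ hdyna _ ih => rw [ih (hc.doAct happ) hf, tstar_doAct_of_dyna hG hc happ hdyna]

end

variable [DecidableEq N]

theorem dyna_run_yields_tstar_general (n : ℕ) (tG : Finset (N × ℕ × ℕ))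
    (hG : IsGold n tG) (c : Config N) (hc : Valid n c)
    (c' : Config N) (hrun : DynaRun n tG c c') (hf : Final n c') :
    c'.t = tstar tG c :=
  hrun.t_eq_tstar hG hc.wellFormed hf

/-- Following the dynamic oracle produces the optimal tree: any sequence of
transitions from a valid `c`, each of whose actions is in the dynamic oracle
of the configuration it leaves, that ends at a final configuration produces
exactly the bracket set `t*(c)`. -/
theorem dyna_run_yields_tstar (n : ℕ) (hn : 1 ≤ n) (tG : Finset (N × ℕ × ℕ))
    (hG : IsGold n tG) (c : Config N) (hc : Valid n c)
    (c' : Config N) (hrun : DynaRun n tG c c') (hf : Final n c') :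
    c'.t = tstar tG c :=
  dyna_run_yields_tstar_general n tG hG c hc c' hrun hf

end SpanParser
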